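/- Let A ∈ ℂ^{m×m}, B ∈ ℂ^{n×n} be complex matrices viewed as quaternion matrices, and C = C₁ + C₂·j with C₁, C₂ ∈ ℂ^{m×n}. A quaternion matrix X = X₁ + X₂·j (X₁, X₂ complex) satisfies AX - X^i B = C (where X^i applies h ↦ -ihi entrywise, so X^i = X₁ - X₂j) if and only if AX₁ - X₁B = C₁ and AX₂ + X₂·conj(B) = C₂, where conj(B) is the entrywise complex conjugate. -/

import Mathlib

open Quaternion

noncomputable def qi : ℍ[ℝ] := ⟨0, 1, 0, 0⟩
noncomputable def qj : ℍ[ℝ] := ⟨0, 0, 1, 0⟩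

/-- The embedding of `ℂ` into `ℍ[ℝ]` as the span of `1` and `i`. -/
noncomputable def cq (z : ℂ) : ℍ[ℝ] := ⟨z.re, z.im, 0, 0⟩

/-- A complex matrix viewed as a quaternion matrix. -/
noncomputable def cmap {m n : ℕ} (M : Matrix (Fin m) (Fin n) ℂ) :
    Matrix (Fin m) (Fin n) ℍ[ℝ] := M.map cq

/-- Entrywise application of the involutive automorphism `h ↦ -ihi`. -/
noncomputable def phiM {m n : ℕ} (M : Matrix (Fin m) (Fin n) ℍ[ℝ]) :
    Matrix (Fin m) (Fin n) ℍ[ℝ] := M.map fun h => -(qi * h * qi)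

/-- Entrywise right multiplication by `j`. -/
noncomputable def jmul {m n : ℕ} (M : Matrix (Fin m) (Fin n) ℍ[ℝ]) :
    Matrix (Fin m) (Fin n) ℍ[ℝ] := M.map fun h => h * qj

/-!
Write `X = X₁ + X₂ j`. Since `j` anticommutes with `i`, the map `h ↦ -ihi` fixes `ℂ` and negates
`ℂ j`, so `X^i = X₁ - X₂ j`. Moving `j` to the right through `B` via `j B = conj(B) j` gives
`A X - X^i B = (A X₁ - X₁ B) + (A X₂ + X₂ conj(B)) j`, and a quaternion matrix determines its two
complex components uniquely.
-/

attribute [local simp] Quaternion.re_mul Quaternion.imI_mul Quaternion.imJ_mul Quaternion.imK_mul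

@[simp] lemma cq_re (z : ℂ) : (cq z).re = z.re := rfl
@[simp] lemma cq_imI (z : ℂ) : (cq z).imI = z.im := rfl
@[simp] lemma cq_imJ (z : ℂ) : (cq z).imJ = 0 := rfl
@[simp] lemma cq_imK (z : ℂ) : (cq z).imK = 0 := rfl

@[simp] lemma qi_re : qi.re = 0 := rfl
@[simp] lemma qi_imI : qi.imI = 1 := rfl
@[simp] lemma qi_imJ : qi.imJ = 0 := rfl
@[simp] lemma qi_imK : qi.imK = 0 := rfl

@[simp] lemma qj_re : qj.re = 0 := rfl
@[simp] lemma qj_imI : qj.imI = 0 := rfl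
@[simp] lemma qj_imJ : qj.imJ = 1 := rfl
@[simp] lemma qj_imK : qj.imK = 0 := rfl

noncomputable def cqRingHom : ℂ →+* ℍ[ℝ] where
  toFun := cq
  map_one' := by ext <;> simp
  map_mul' _ _ := by ext <;> simp
  map_zero' := by ext <;> simp
  map_add' _ _ := by ext <;> simp

lemma qj_mul_cq (z : ℂ) : qj * cq z = cq (starRingEnd ℂ z) * qj := by
  ext <;> simp

lemma neg_qi_mul_mul_qi (x y : ℂ) : -(qi * (cq x + cq y * qj) * qi) = cq x - cq y * qj := by
  ext <;> simp

lemma cq_add_cq_mul_qj_inj {u v u' v' : ℂ} :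
    cq u + cq v * qj = cq u' + cq v' * qj ↔ u = u' ∧ v = v' := by
  simp [Quaternion.ext_iff, Complex.ext_iff, and_assoc]

section Matrices

variable {l m n : ℕ}

lemma cmap_mul (M : Matrix (Fin l) (Fin m) ℂ) (N : Matrix (Fin m) (Fin n) ℂ) :
    cmap (M * N) = cmap M * cmap N :=
  Matrix.map_mul (f := cqRingHom)

lemma cmap_add (M N : Matrix (Fin m) (Fin n) ℂ) : cmap (M + N) = cmap M + cmap N :=
  Matrix.map_add cqRingHom (map_add cqRingHom) M N

lemma cmap_sub (M N : Matrix (Fin m) (Fin n) ℂ) : cmap (M - N) = cmap M - cmap N :=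
  Matrix.map_sub cqRingHom (map_sub cqRingHom) M N

lemma jmul_eq_mul_scalar (M : Matrix (Fin m) (Fin n) ℍ[ℝ]) :
    jmul M = M * Matrix.scalar (Fin n) qj := by
  refine Matrix.ext fun i k => ?_
  simp [jmul, Matrix.mul_diagonal]

lemma scalar_qj_mul_cmap (B : Matrix (Fin m) (Fin n) ℂ) :
    Matrix.scalar (Fin m) qj * cmap B =
      cmap (B.map (starRingEnd ℂ)) * Matrix.scalar (Fin n) qj := by
  refine Matrix.ext fun i k => ?_
  simp [Matrix.diagonal_mul, Matrix.mul_diagonal, cmap, qj_mul_cq]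

lemma jmul_add (M N : Matrix (Fin m) (Fin n) ℍ[ℝ]) : jmul (M + N) = jmul M + jmul N := by
  simp only [jmul_eq_mul_scalar, Matrix.add_mul]

lemma mul_jmul (M : Matrix (Fin l) (Fin m) ℍ[ℝ]) (N : Matrix (Fin m) (Fin n) ℍ[ℝ]) :
    M * jmul N = jmul (M * N) := by
  simp only [jmul_eq_mul_scalar, Matrix.mul_assoc]

lemma jmul_mul_cmap (M : Matrix (Fin l) (Fin m) ℍ[ℝ]) (B : Matrix (Fin m) (Fin n) ℂ) :
    jmul M * cmap B = jmul (M * cmap (B.map (starRingEnd ℂ))) := by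
  simp only [jmul_eq_mul_scalar, Matrix.mul_assoc, scalar_qj_mul_cmap]

lemma phiM_cmap_add_jmul (X₁ X₂ : Matrix (Fin m) (Fin n) ℂ) :
    phiM (cmap X₁ + jmul (cmap X₂)) = cmap X₁ - jmul (cmap X₂) :=
  Matrix.ext fun i k => neg_qi_mul_mul_qi (X₁ i k) (X₂ i k)

lemma cmap_add_jmul_cmap_inj {U V U' V' : Matrix (Fin m) (Fin n) ℂ} :
    cmap U + jmul (cmap V) = cmap U' + jmul (cmap V') ↔ U = U' ∧ V = V' := by
  simp only [← Matrix.ext_iff, ← forall_and]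
  exact forall₂_congr fun i k => cq_add_cq_mul_qj_inj

end Matrices

theorem sylvester_type_split {m n : ℕ}
    (A : Matrix (Fin m) (Fin m) ℂ) (B : Matrix (Fin n) (Fin n) ℂ)
    (C₁ C₂ X₁ X₂ : Matrix (Fin m) (Fin n) ℂ) :
    (cmap A * (cmap X₁ + jmul (cmap X₂)) -
        phiM (cmap X₁ + jmul (cmap X₂)) * cmap B =
      cmap C₁ + jmul (cmap C₂)) ↔
    (A * X₁ - X₁ * B = C₁ ∧ A * X₂ + X₂ * B.map (starRingEnd ℂ) = C₂) := by
  have split : cmap A * (cmap X₁ + jmul (cmap X₂)) -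
        phiM (cmap X₁ + jmul (cmap X₂)) * cmap B =
      cmap (A * X₁ - X₁ * B) + jmul (cmap (A * X₂ + X₂ * B.map (starRingEnd ℂ))) := by
    rw [phiM_cmap_add_jmul, Matrix.mul_add, Matrix.sub_mul, mul_jmul, jmul_mul_cmap, cmap_sub,
      cmap_add, jmul_add, cmap_mul, cmap_mul, cmap_mul, cmap_mul]
    abel
  rw [split, cmap_add_jmul_cmap_inj]
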